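/- Energy bound for the Dirichlet form. For any γ > 0, any real numbers (h_x)_{x ∈ ℤ/nℤ}, and any g: Ω_n → ℝ with ∫ g² dν_ρ = 1, one has γ · Σ_{x ∈ ℤ/nℤ} h_x · ∫ (η(x) − η(x+1)) g(η)² dν_ρ(η) − n·D(g) ≤ (γ²/n) · Σ_{x ∈ ℤ/nℤ} h_x². -/
import Mathlib


noncomputable section

/-- Expectation with respect to the product Bernoulli(ρ) measure `ν_ρ` on
configurations `Ω_n = {0,1}^{ℤ/nℤ}`. -/
def nuExp (n : ℕ) [NeZero n] (ρ : ℝ) (φ : (ZMod n → Bool) → ℝ) : ℝ :=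
  ∑ η : ZMod n → Bool, (∏ x : ZMod n, (if η x then ρ else 1 - ρ)) * φ η

/-- The configuration `η^{x,y}`, obtained from `η` by exchanging the values at `x` and `y`. -/
def swapConf {n : ℕ} (η : ZMod n → Bool) (x y : ZMod n) : ZMod n → Bool :=
  fun z => if z = x then η y else if z = y then η x else η z

/-- The elementary Dirichlet form `D^{x,y}(g) = (1/2)∫ (g(η^{x,y}) − g(η))² dν_ρ`. -/
def Dxy (n : ℕ) [NeZero n] (ρ : ℝ) (x y : ZMod n) (g : (ZMod n → Bool) → ℝ) : ℝ :=
  (1 / 2) * nuExp n ρ (fun η => (g (swapConf η x y) - g η) ^ 2)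

/-- The exclusion Dirichlet form `D(g) = Σ_x D^{x,x+1}(g)`. -/
def Dform (n : ℕ) [NeZero n] (ρ : ℝ) (g : (ZMod n → Bool) → ℝ) : ℝ :=
  ∑ x : ZMod n, Dxy n ρ x (x + 1) g

lemma swapConf_eq {n : ℕ} (η : ZMod n → Bool) (x y : ZMod n) :
    swapConf η x y = η ∘ (Equiv.swap x y) := by
  funext z
  simp only [swapConf, Function.comp, Equiv.swap_apply_def]
  split_ifs <;> rfl

lemma wt_nonneg (n : ℕ) [NeZero n] {ρ : ℝ} (hρ0 : 0 ≤ ρ) (hρ1 : ρ ≤ 1) (η : ZMod n → Bool) :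
    0 ≤ ∏ x : ZMod n, (if η x then ρ else 1 - ρ) :=
  Finset.prod_nonneg fun x _ => by split <;> linarith

lemma nuExp_mono (n : ℕ) [NeZero n] {ρ : ℝ} (hρ0 : 0 ≤ ρ) (hρ1 : ρ ≤ 1)
    {φ ψ : (ZMod n → Bool) → ℝ} (hfg : ∀ η, φ η ≤ ψ η) :
    nuExp n ρ φ ≤ nuExp n ρ ψ :=
  Finset.sum_le_sum fun η _ => mul_le_mul_of_nonneg_left (hfg η) (wt_nonneg n hρ0 hρ1 η)

lemma nuExp_add (n : ℕ) [NeZero n] (ρ : ℝ) (φ ψ : (ZMod n → Bool) → ℝ) :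
    nuExp n ρ (fun η => φ η + ψ η) = nuExp n ρ φ + nuExp n ρ ψ := by
  unfold nuExp
  rw [← Finset.sum_add_distrib]
  exact Finset.sum_congr rfl fun η _ => by ring

lemma nuExp_smul (n : ℕ) [NeZero n] (ρ c : ℝ) (φ : (ZMod n → Bool) → ℝ) :
    nuExp n ρ (fun η => c * φ η) = c * nuExp n ρ φ := by
  unfold nuExp
  rw [Finset.mul_sum]
  exact Finset.sum_congr rfl fun η _ => by ring

lemma nuExp_swap (n : ℕ) [NeZero n] (ρ : ℝ) (x y : ZMod n) (φ : (ZMod n → Bool) → ℝ) :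
    nuExp n ρ (fun η => φ (swapConf η x y)) = nuExp n ρ φ := by
  classical
  unfold nuExp
  refine Fintype.sum_bijective (fun η : ZMod n → Bool => η ∘ (Equiv.swap x y))
    ?_ _ _ fun η => ?_
  · have hinv : Function.Involutive (fun η : ZMod n → Bool => η ∘ (Equiv.swap x y)) := by
      intro η; funext z; simp [Function.comp, Equiv.swap_apply_self]
    exact hinv.bijective
  · dsimp only
    rw [swapConf_eq]
    congr 1
    exact (Equiv.prod_comp (Equiv.swap x y) (fun z => if η z then ρ else 1 - ρ)).symm

lemma swapConf_invol {n : ℕ} (η : ZMod n → Bool) (x y : ZMod n) :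
    swapConf (swapConf η x y) x y = η := by
  rw [swapConf_eq, swapConf_eq]
  funext z; simp [Function.comp, Equiv.swap_apply_self]

/-- **Energy bound for the Dirichlet form.** For any `γ > 0`,
real numbers `(h_x)_{x ∈ ℤ/nℤ}` and any `g` with `∫ g² dν_ρ = 1`,
`γ Σ_x h_x ∫ (η(x) − η(x+1)) g(η)² dν_ρ − n·D(g) ≤ (γ²/n) Σ_x h_x²`. -/
theorem energy_bound (n : ℕ) [NeZero n] (hn : 3 ≤ n) (ρ : ℝ) (hρ0 : 0 < ρ) (hρ1 : ρ < 1)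
    (γ : ℝ) (hγ : 0 < γ) (h : ZMod n → ℝ)
    (g : (ZMod n → Bool) → ℝ) (hg : nuExp n ρ (fun η => (g η) ^ 2) = 1) :
    γ * ∑ x : ZMod n, h x *
        nuExp n ρ (fun η =>
          ((if η x then (1 : ℝ) else 0) - (if η (x + 1) then (1 : ℝ) else 0)) * (g η) ^ 2)
      - (n : ℝ) * Dform n ρ g
      ≤ (γ ^ 2 / (n : ℝ)) * ∑ x : ZMod n, (h x) ^ 2 := by
  have hN : (0:ℝ) < n := by positivity
  have hne : ∀ x : ZMod n, x + 1 ≠ x := by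
    intro x hx
    haveI : Fact (1 < n) := ⟨by omega⟩
    have h1 : (1 : ZMod n) = 0 := by
      have : x + 1 = x + 0 := by rw [add_zero]; exact hx
      exact add_left_cancel this
    exact one_ne_zero h1
  -- per-site bound
  have site : ∀ x : ZMod n,
      γ * (h x * nuExp n ρ (fun η =>
          ((if η x then (1 : ℝ) else 0) - (if η (x + 1) then (1 : ℝ) else 0)) * (g η) ^ 2))
        ≤ γ ^ 2 / n * (h x) ^ 2 + (n : ℝ) * Dxy n ρ x (x + 1) g := by
    intro x
    set χ : (ZMod n → Bool) → ℝ := fun η =>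
      ((if η x then (1 : ℝ) else 0) - (if η (x + 1) then (1 : ℝ) else 0)) with hχ
    set T : (ZMod n → Bool) → (ZMod n → Bool) := fun η => swapConf η x (x + 1) with hT
    have hχT : ∀ η, χ (T η) = - χ η := by
      intro η
      have h1 : T η x = η (x + 1) := by simp [hT, swapConf]
      have h2 : T η (x + 1) = η x := by
        simp only [hT, swapConf]
        rw [if_neg (hne x)]
        simp
      simp only [hχ, h1, h2]; ring
    have hTT : ∀ η, T (T η) = η := fun η => swapConf_invol η x (x + 1)
    -- symmetrization identity
    have hsym : nuExp n ρ (fun η => χ η * (g η) ^ 2)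
        = (1/2) * nuExp n ρ (fun η => χ η * ((g η) ^ 2 - (g (T η)) ^ 2)) := by
      have hBA : nuExp n ρ (fun η => χ η * (g (T η)) ^ 2)
          = - nuExp n ρ (fun η => χ η * (g η) ^ 2) := by
        have := nuExp_swap n ρ x (x + 1) (fun η => χ η * (g (T η)) ^ 2)
        rw [← this]
        have : (fun η => χ (swapConf η x (x+1)) * (g (T (swapConf η x (x+1)))) ^ 2)
            = fun η => - (χ η * (g η) ^ 2) := by
          funext η
          have : swapConf η x (x+1) = T η := rfl
          rw [this, hχT, hTT]; ring
        rw [show (fun η => (fun η' => χ η' * (g (T η')) ^ 2) (swapConf η x (x+1)))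
            = fun η => - (χ η * (g η) ^ 2) from this]
        rw [show (fun η => - (χ η * g η ^ 2)) = fun η => (-1 : ℝ) * (χ η * g η ^ 2) by
          funext η; ring, nuExp_smul]
        ring
      have hsub : nuExp n ρ (fun η => χ η * ((g η) ^ 2 - (g (T η)) ^ 2))
          = nuExp n ρ (fun η => χ η * (g η) ^ 2)
            - nuExp n ρ (fun η => χ η * (g (T η)) ^ 2) := by
        rw [show (fun η => χ η * ((g η) ^ 2 - (g (T η)) ^ 2))
            = fun η => χ η * (g η) ^ 2 + (-1 : ℝ) * (χ η * (g (T η)) ^ 2) by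
          funext η; ring, nuExp_add, nuExp_smul]
        ring
      rw [hsub, hBA]; ring
    -- pointwise Young bound, then integrate
    have hχ2 : ∀ η, (χ η) ^ 2 ≤ 1 := by
      intro η; simp only [hχ]
      cases η x <;> cases η (x + 1) <;> norm_num
    set d : ℝ := γ * h x with hd
    have point : ∀ η, (d / 2) * (χ η * ((g η) ^ 2 - (g (T η)) ^ 2))
        ≤ d ^ 2 / n * (((g η) ^ 2 + (g (T η)) ^ 2) / 2)
          + (n / 2) * (g (T η) - g η) ^ 2 := by
      intro η
      set a := g η; set b := g (T η); set c := χ η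
      have hc : c ^ 2 ≤ 1 := hχ2 η
      have key : (n : ℝ) * (d * (c * (a ^ 2 - b ^ 2)))
          ≤ d ^ 2 * (a ^ 2 + b ^ 2) + (n : ℝ) ^ 2 * (b - a) ^ 2 := by
        nlinarith [sq_nonneg (d * c * (a + b) - (n : ℝ) * (a - b)),
          mul_nonneg (mul_nonneg (sq_nonneg d) (by linarith : (0:ℝ) ≤ 1 - c ^ 2))
            (sq_nonneg (a + b)), sq_nonneg (a - b), sq_nonneg (a + b)]
      calc (d / 2) * (c * (a ^ 2 - b ^ 2))
          = ((n : ℝ) * (d * (c * (a ^ 2 - b ^ 2)))) / (2 * n) := by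
            field_simp
        _ ≤ (d ^ 2 * (a ^ 2 + b ^ 2) + (n : ℝ) ^ 2 * (b - a) ^ 2) / (2 * n) := by
            gcongr
        _ = d ^ 2 / n * ((a ^ 2 + b ^ 2) / 2) + (n / 2) * (b - a) ^ 2 := by
            field_simp
    -- integrate the pointwise bound
    have hmono := nuExp_mono n hρ0.le hρ1.le point
    have lhs_eq : nuExp n ρ (fun η => (d / 2) * (χ η * ((g η) ^ 2 - (g (T η)) ^ 2)))
        = γ * (h x * nuExp n ρ (fun η => χ η * (g η) ^ 2)) := by
      rw [nuExp_smul, hsym]; simp only [hd]; ring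
    have rhs_eq : nuExp n ρ (fun η =>
          d ^ 2 / n * (((g η) ^ 2 + (g (T η)) ^ 2) / 2) + (n / 2) * (g (T η) - g η) ^ 2)
        = d ^ 2 / n + (n : ℝ) * Dxy n ρ x (x + 1) g := by
      rw [nuExp_add]
      have e1 : nuExp n ρ (fun η => d ^ 2 / n * (((g η) ^ 2 + (g (T η)) ^ 2) / 2))
          = d ^ 2 / n := by
        rw [show (fun η => d ^ 2 / n * (((g η) ^ 2 + (g (T η)) ^ 2) / 2))
            = fun η => (d ^ 2 / n / 2) * ((g η) ^ 2 + (g (T η)) ^ 2) by funext η; ring,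
          nuExp_smul, nuExp_add, hg]
        have : nuExp n ρ (fun η => (g (T η)) ^ 2) = 1 := by
          have h' := nuExp_swap n ρ x (x + 1) (fun η' => (g η') ^ 2)
          rw [hg] at h'
          exact h'
        rw [this]; ring
      have e2 : nuExp n ρ (fun η => (n / 2 : ℝ) * (g (T η) - g η) ^ 2)
          = (n : ℝ) * Dxy n ρ x (x + 1) g := by
        rw [nuExp_smul, Dxy]; ring
      rw [e1, e2]
    rw [lhs_eq, rhs_eq] at hmono
    have : d ^ 2 / n = γ ^ 2 / n * (h x) ^ 2 := by rw [hd]; ring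
    linarith
  have hD : (n : ℝ) * Dform n ρ g = ∑ x : ZMod n, (n : ℝ) * Dxy n ρ x (x + 1) g := by
    rw [Dform, Finset.mul_sum]
  have hH : γ ^ 2 / (n : ℝ) * ∑ x : ZMod n, (h x) ^ 2
      = ∑ x : ZMod n, γ ^ 2 / (n : ℝ) * (h x) ^ 2 := Finset.mul_sum _ _ _
  rw [Finset.mul_sum, hD, hH, sub_le_iff_le_add, ← Finset.sum_add_distrib]
  exact Finset.sum_le_sum fun x _ => site x

end
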